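/- arXiv:2404.03234 — 6 statements merged into one kernel-verified Lean document; each statement's English description precedes it below -/
import Mathlib

section
/- For any two m-dimensional subspaces V and W of ℂ^n, there exist orthonormal bases (v_i) of V and (w_j) of W and nonnegative real numbers c_1, ..., c_m (the cosines of the principal angles) such that ⟨v_i, w_j⟩ = c_i · δ_{ij} for all i, j. -/
/-!
Let `T : V → W` be the orthogonal projection onto `W` restricted to `V`. An orthonormal eigenbasis
`v` of the positive operator `T† T` on `V` has pairwise orthogonal images `T vᵢ`, because
`⟪T vᵢ, T vⱼ⟫ = ⟪vᵢ, T† T vⱼ⟫`. Normalising the nonzero images and completing them to an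
orthonormal basis `w` of `W` gives `T vᵢ = ‖T vᵢ‖ • wᵢ`, and since the projection is self-adjoint,
`⟪vᵢ, wⱼ⟫ = ⟪T vᵢ, wⱼ⟫ = ‖T vᵢ‖ δᵢⱼ`.
-/

open Module InnerProductSpace

variable {𝕜 E F : Type*} [RCLike 𝕜] [NormedAddCommGroup E] [InnerProductSpace 𝕜 E]
  [NormedAddCommGroup F] [InnerProductSpace 𝕜 F]

theorem exists_orthonormalBasis_norm_smul_eq [FiniteDimensional 𝕜 E] {ι : Type*} [Fintype ι]
    (card_ι : finrank 𝕜 E = Fintype.card ι) {f : ι → E}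
    (hf : Pairwise fun i j => ⟪f i, f j⟫_𝕜 = 0) :
    ∃ b : OrthonormalBasis ι 𝕜 E, ∀ i, (‖f i‖ : 𝕜) • b i = f i := by
  let s : Set ι := {i | f i ≠ 0}
  have hs : Orthonormal 𝕜 (s.domRestrict fun i => (‖f i‖⁻¹ : 𝕜) • f i) := by
    refine ⟨fun i => ?_, fun i j hij => ?_⟩
    · simp [norm_smul, inv_mul_cancel₀ (norm_ne_zero_iff.mpr i.2)]
    · simp [inner_smul_left, inner_smul_right, hf (Subtype.coe_ne_coe.mpr hij)]
  obtain ⟨b, hb⟩ := hs.exists_orthonormalBasis_extension_of_card_eq card_ι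
  refine ⟨b, fun i => ?_⟩
  by_cases hi : f i = 0
  · simp [hi]
  · rw [hb i hi, smul_smul, mul_inv_cancel₀ (by simpa using hi), one_smul]

theorem LinearMap.exists_orthonormalBasis_apply_eq_smul [FiniteDimensional 𝕜 E]
    [FiniteDimensional 𝕜 F] {m : ℕ} (hE : finrank 𝕜 E = m) (hF : finrank 𝕜 F = m)
    (T : E →ₗ[𝕜] F) :
    ∃ (v : OrthonormalBasis (Fin m) 𝕜 E) (w : OrthonormalBasis (Fin m) 𝕜 F) (c : Fin m → ℝ),
      (∀ i, 0 ≤ c i) ∧ ∀ i, T (v i) = (c i : 𝕜) • w i := by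
  have hT := T.isPositive_adjoint_comp_self.isSymmetric
  let v := hT.eigenvectorBasis hE
  have horth : Pairwise fun i j => ⟪T (v i), T (v j)⟫_𝕜 = 0 := fun i j hij => by
    change ⟪T (v i), T (v j)⟫_𝕜 = 0
    rw [← adjoint_inner_right, ← comp_apply, hT.apply_eigenvectorBasis, inner_smul_right,
      v.orthonormal.2 hij, mul_zero]
  obtain ⟨w, hw⟩ := exists_orthonormalBasis_norm_smul_eq (by simpa using hF) horth
  exact ⟨v, w, fun i => ‖T (v i)‖, fun _ => norm_nonneg _, fun i => (hw i).symm⟩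

theorem Submodule.exists_orthonormalBasis_inner_eq_ite (V W : Submodule 𝕜 E)
    [FiniteDimensional 𝕜 V] [FiniteDimensional 𝕜 W] {m : ℕ}
    (hV : finrank 𝕜 V = m) (hW : finrank 𝕜 W = m) :
    ∃ (v : OrthonormalBasis (Fin m) 𝕜 V) (w : OrthonormalBasis (Fin m) 𝕜 W) (c : Fin m → ℝ),
      (∀ i, 0 ≤ c i) ∧ ∀ i j, ⟪(v i : E), (w j : E)⟫_𝕜 = if i = j then (c i : 𝕜) else 0 := by
  obtain ⟨v, w, c, hc, hvw⟩ := LinearMap.exists_orthonormalBasis_apply_eq_smul hV hW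
    (W.orthogonalProjectionOnto.toLinearMap ∘ₗ V.subtype)
  refine ⟨v, w, c, hc, fun i j => ?_⟩
  calc ⟪(v i : E), (w j : E)⟫_𝕜 = ⟪W.orthogonalProjectionOnto (v i : E), w j⟫_𝕜 :=
        (inner_orthogonalProjectionOnto_eq_of_mem_right _ _).symm
    _ = ⟪(c i : 𝕜) • w i, w j⟫_𝕜 := congrArg (⟪·, w j⟫_𝕜) (hvw i)
    _ = if i = j then (c i : 𝕜) else 0 := by
        simp [inner_smul_left, orthonormal_iff_ite.mp w.orthonormal]

theorem OrthonormalBasis.span_range_coe {ι : Type*} [Fintype ι] {V : Submodule 𝕜 E}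
    (b : OrthonormalBasis ι 𝕜 V) : Submodule.span 𝕜 (Set.range fun i => (b i : E)) = V :=
  (Submodule.span_range_subtype_eq_top_iff V fun i => (b i).2).mp b.toBasis.span_eq

theorem OrthonormalBasis.orthonormal_coe {ι : Type*} [Fintype ι] {V : Submodule 𝕜 E}
    (b : OrthonormalBasis ι 𝕜 V) : Orthonormal 𝕜 fun i => (b i : E) :=
  b.orthonormal.comp_linearIsometry V.subtypeₗᵢ

/-- For any two `m`-dimensional subspaces `V`, `W` of `ℂ^n`, there exist
orthonormal bases `(v i)` of `V` and `(w j)` of `W` and nonnegative reals `c i`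
(cosines of the principal angles) with `⟨v i, w j⟩ = c i · δ_{ij}`. -/
theorem stmt0 (n m : ℕ) (V W : Submodule ℂ (EuclideanSpace ℂ (Fin n)))
    (hV : Module.finrank ℂ V = m) (hW : Module.finrank ℂ W = m) :
    ∃ (v w : Fin m → EuclideanSpace ℂ (Fin n)) (c : Fin m → ℝ),
      (∀ i, v i ∈ V) ∧ (∀ i, w i ∈ W) ∧
      Orthonormal ℂ v ∧ Orthonormal ℂ w ∧
      Submodule.span ℂ (Set.range v) = V ∧
      Submodule.span ℂ (Set.range w) = W ∧
      (∀ i, 0 ≤ c i) ∧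
      (∀ i j, (inner ℂ (v i) (w j) : ℂ) = if i = j then (c i : ℂ) else 0) := by
  obtain ⟨v, w, c, hc, hvw⟩ := V.exists_orthonormalBasis_inner_eq_ite W hV hW
  exact ⟨fun i => v i, fun i => w i, c, fun i => (v i).2, fun i => (w i).2, v.orthonormal_coe,
    w.orthonormal_coe, v.span_range_coe, w.span_range_coe, hc, hvw⟩
end

section
/- Let V, W, V', W' be m-dimensional subspaces of ℂ^n. If there exist principal bases with identical principal angles, i.e. orthonormal bases (v_i) of V, (w_i) of W, (v'_i) of V', (w'_i) of W' and numbers c_i ≥ 0 with ⟨v_i, w_j⟩ = c_i δ_{ij} = ⟨v'_i, w'_j⟩, then there exists a unitary U on ℂ^n with U(V) = V' and U(W) = W'. -/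
/-!
Concatenating each pair of principal bases, the families `(v, w)` and `(v', w')` have the same
Gram matrix, namely `[[1, diag c], [diag c, 1]]`. Families with equal Gram matrices differ by a
unitary: the map `∑ aᵢ uᵢ ↦ ∑ aᵢ u'ᵢ` is well defined and isometric on the span, and extends to
the whole space since the orthogonal complements have equal dimension.
-/

open Matrix Submodule
open scoped InnerProductSpace

variable {𝕜 E : Type*} [RCLike 𝕜] [NormedAddCommGroup E] [InnerProductSpace 𝕜 E]

theorem LinearMap.exists_linearIsometry_range_apply_eq_of_inner_eq {M : Type*} [AddCommGroup M]
    [Module 𝕜 M] (f f' : M →ₗ[𝕜] E) (h : ∀ a b, ⟪f a, f b⟫_𝕜 = ⟪f' a, f' b⟫_𝕜) :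
    ∃ g : LinearMap.range f →ₗᵢ[𝕜] E, ∀ a, g ⟨f a, LinearMap.mem_range_self f a⟩ = f' a := by
  obtain ⟨s, hs⟩ := f.rangeRestrict.exists_rightInverse_of_surjective f.range_rangeRestrict
  have hfs : ∀ x, f (s x) = x := fun x => congrArg Subtype.val (LinearMap.congr_fun hs x)
  have hg : ∀ x y, ⟪f' (s x), f' (s y)⟫_𝕜 = ⟪x, y⟫_𝕜 := fun x y => by
    rw [← h, hfs, hfs, Submodule.coe_inner]
  refine ⟨(f' ∘ₗ s).isometryOfInner hg, fun a => ?_⟩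
  -- `s (f a) - a` lies in `ker f`, which equals `ker f'` since the two forms agree.
  have hker : f' (s ⟨f a, LinearMap.mem_range_self f a⟩ - a) = 0 := by
    rw [← inner_self_eq_zero (𝕜 := 𝕜), ← h, map_sub, hfs, sub_self, inner_zero_left]
  rw [map_sub, sub_eq_zero] at hker
  exact hker

theorem LinearMap.exists_linearIsometryEquiv_apply_eq_of_inner_eq [FiniteDimensional 𝕜 E]
    {M : Type*} [AddCommGroup M] [Module 𝕜 M] (f f' : M →ₗ[𝕜] E)
    (h : ∀ a b, ⟪f a, f b⟫_𝕜 = ⟪f' a, f' b⟫_𝕜) :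
    ∃ U : E ≃ₗᵢ[𝕜] E, ∀ a, U (f a) = f' a := by
  obtain ⟨g, hg⟩ := f.exists_linearIsometry_range_apply_eq_of_inner_eq f' h
  exact ⟨g.extend.toLinearIsometryEquiv rfl, fun a => (g.extend_apply _).trans (hg a)⟩

theorem exists_linearIsometryEquiv_apply_eq_of_gram_eq [FiniteDimensional 𝕜 E] {ι : Type*}
    [Fintype ι] [DecidableEq ι] (u u' : ι → E) (h : gram 𝕜 u = gram 𝕜 u') :
    ∃ U : E ≃ₗᵢ[𝕜] E, ∀ i, U (u i) = u' i := by
  obtain ⟨U, hU⟩ := LinearMap.exists_linearIsometryEquiv_apply_eq_of_inner_eq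
    (Fintype.linearCombination 𝕜 u) (Fintype.linearCombination 𝕜 u') fun a b => by
      have h' : ∀ i j, ⟪u i, u j⟫_𝕜 = ⟪u' i, u' j⟫_𝕜 := congrFun₂ h
      simp only [Fintype.linearCombination_apply, sum_inner, inner_sum, inner_smul_left,
        inner_smul_right, h']
  refine ⟨U, fun i => ?_⟩
  simpa using hU (Pi.single i 1)

theorem gram_sum_elim_of_orthonormal {ι : Type*} [DecidableEq ι] {v w : ι → E} {c : ι → ℝ}
    (hv : Orthonormal 𝕜 v) (hw : Orthonormal 𝕜 w)
    (hvw : ∀ i j, ⟪v i, w j⟫_𝕜 = if i = j then (c i : 𝕜) else 0) :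
    gram 𝕜 (Sum.elim v w) =
      fromBlocks 1 (diagonal fun i => (c i : 𝕜)) (diagonal fun i => (c i : 𝕜)) 1 := by
  ext (i | i) (j | j)
  · simp [orthonormal_iff_ite.mp hv i j, one_apply]
  · simp [hvw i j, diagonal_apply]
  · rw [gram_apply, Sum.elim_inr, Sum.elim_inl, ← inner_conj_symm, hvw j i]
    by_cases hij : i = j
    · subst hij; simp
    · simp [hij, Ne.symm hij]
  · simp [orthonormal_iff_ite.mp hw i j, one_apply]

theorem LinearIsometryEquiv.map_span_range_eq {ι : Type*} (U : E ≃ₗᵢ[𝕜] E) {u u' : ι → E}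
    (h : ∀ i, U (u i) = u' i) :
    map (U.toLinearEquiv : E →ₗ[𝕜] E) (span 𝕜 (Set.range u)) = span 𝕜 (Set.range u') := by
  rw [map_span, ← Set.range_comp]
  exact congrArg _ (congrArg _ (funext h))

theorem stmt6_general (n m : ℕ) (V W V' W' : Submodule ℂ (EuclideanSpace ℂ (Fin n)))
    (v w v' w' : Fin m → EuclideanSpace ℂ (Fin n)) (c : Fin m → ℝ)
    (hv : Orthonormal ℂ v) (hw : Orthonormal ℂ w)
    (hv' : Orthonormal ℂ v') (hw' : Orthonormal ℂ w')
    (hVs : Submodule.span ℂ (Set.range v) = V)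
    (hWs : Submodule.span ℂ (Set.range w) = W)
    (hVs' : Submodule.span ℂ (Set.range v') = V')
    (hWs' : Submodule.span ℂ (Set.range w') = W')
    (hvw : ∀ i j, (inner ℂ (v i) (w j) : ℂ) = if i = j then (c i : ℂ) else 0)
    (hvw' : ∀ i j, (inner ℂ (v' i) (w' j) : ℂ) = if i = j then (c i : ℂ) else 0) :
    ∃ U : EuclideanSpace ℂ (Fin n) ≃ₗᵢ[ℂ] EuclideanSpace ℂ (Fin n),
      Submodule.map (U.toLinearEquiv : EuclideanSpace ℂ (Fin n) →ₗ[ℂ] EuclideanSpace ℂ (Fin n)) V = V' ∧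
      Submodule.map (U.toLinearEquiv : EuclideanSpace ℂ (Fin n) →ₗ[ℂ] EuclideanSpace ℂ (Fin n)) W = W' := by
  have hgram : gram ℂ (Sum.elim v w) = gram ℂ (Sum.elim v' w') := by
    rw [gram_sum_elim_of_orthonormal hv hw hvw, gram_sum_elim_of_orthonormal hv' hw' hvw']
  obtain ⟨U, hU⟩ := exists_linearIsometryEquiv_apply_eq_of_gram_eq _ _ hgram
  subst hVs hWs hVs' hWs'
  exact ⟨U, U.map_span_range_eq fun i => hU (.inl i), U.map_span_range_eq fun i => hU (.inr i)⟩

/-- If two pairs of `m`-dimensional subspaces of `ℂ^n` admit principal bases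
with identical principal angles, then there is a unitary mapping one pair onto the other. -/
theorem stmt6 (n m : ℕ) (V W V' W' : Submodule ℂ (EuclideanSpace ℂ (Fin n)))
    (v w v' w' : Fin m → EuclideanSpace ℂ (Fin n)) (c : Fin m → ℝ)
    (hc : ∀ i, 0 ≤ c i)
    (hv : Orthonormal ℂ v) (hw : Orthonormal ℂ w)
    (hv' : Orthonormal ℂ v') (hw' : Orthonormal ℂ w')
    (hVs : Submodule.span ℂ (Set.range v) = V)
    (hWs : Submodule.span ℂ (Set.range w) = W)
    (hVs' : Submodule.span ℂ (Set.range v') = V')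
    (hWs' : Submodule.span ℂ (Set.range w') = W')
    (hvw : ∀ i j, (inner ℂ (v i) (w j) : ℂ) = if i = j then (c i : ℂ) else 0)
    (hvw' : ∀ i j, (inner ℂ (v' i) (w' j) : ℂ) = if i = j then (c i : ℂ) else 0) :
    ∃ U : EuclideanSpace ℂ (Fin n) ≃ₗᵢ[ℂ] EuclideanSpace ℂ (Fin n),
      Submodule.map (U.toLinearEquiv : EuclideanSpace ℂ (Fin n) →ₗ[ℂ] EuclideanSpace ℂ (Fin n)) V = V' ∧
      Submodule.map (U.toLinearEquiv : EuclideanSpace ℂ (Fin n) →ₗ[ℂ] EuclideanSpace ℂ (Fin n)) W = W' :=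
  stmt6_general n m V W V' W' v w v' w' c hv hw hv' hw' hVs hWs hVs' hWs' hvw hvw'
end

section
/- In the complete bipartite graph K_{n,n}, every cycle is, as an element of the cycle space (1-cycles with integer coefficients), an integer linear combination of 4-cycles of the form i → j → i' → j' → i with i, i' in the first part and j, j' in the second part. -/
/-- Vertices of the complete bipartite graph `K_{n,n}`: left part `Sum.inl`, right part
`Sum.inr`. -/
abbrev BipVtx (n : ℕ) := Fin n ⊕ Fin n

/-- The oriented-edge chain of a single directed edge `a → b`, as an antisymmetric
integer 1-chain. -/
def dedge {V : Type*} [DecidableEq V] (a b : V) : V × V → ℤ :=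
  fun e => if e = (a, b) then 1 else if e = (b, a) then -1 else 0

/-- Boundary of an antisymmetric integer edge chain: at each vertex, the total inflow. -/
def chainBoundary {V : Type*} [Fintype V] (c : V × V → ℤ) : V → ℤ :=
  fun v => ∑ u, c (u, v)

/-- The 4-cycle `i → j → i' → j' → i` in `K_{n,n}` as an integer 1-chain. -/
def fourCycleBip (n : ℕ) (i i' j j' : Fin n) : BipVtx n × BipVtx n → ℤ :=
  dedge (Sum.inl i) (Sum.inr j) + dedge (Sum.inr j) (Sum.inl i')
    + dedge (Sum.inl i') (Sum.inr j') + dedge (Sum.inr j') (Sum.inl i)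

lemma four_ll (n : ℕ) (i i' j j' i1 i2 : Fin n) :
    fourCycleBip n i i' j j' (Sum.inl i1, Sum.inl i2) = 0 := by
  simp [fourCycleBip, dedge, Prod.ext_iff]

lemma four_rr (n : ℕ) (i i' j j' j1 j2 : Fin n) :
    fourCycleBip n i i' j j' (Sum.inr j1, Sum.inr j2) = 0 := by
  simp [fourCycleBip, dedge, Prod.ext_iff]

lemma four_rl (n : ℕ) (i i' j j' i1 j2 : Fin n) :
    fourCycleBip n i i' j j' (Sum.inr j2, Sum.inl i1)
      = -((if i = i1 ∧ j = j2 then 1 else 0) - (if i = i1 ∧ j' = j2 then 1 else 0)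
        - (if i' = i1 ∧ j = j2 then 1 else 0) + (if i' = i1 ∧ j' = j2 then 1 else 0)) := by
  simp only [fourCycleBip, dedge, Pi.add_apply, Prod.mk.injEq, Sum.inl.injEq,
    Sum.inr.injEq, reduceCtorEq, and_false, false_and, if_false]
  by_cases h1 : i = i1 <;> by_cases h2 : j = j2 <;> by_cases h3 : i' = i1 <;>
    by_cases h4 : j' = j2 <;>
      simp [h1, h2, h3, h4, eq_comm] <;> split_ifs <;> first | ring1 | (subst_vars; tauto)

lemma four_lr (n : ℕ) (i i' j j' i1 j2 : Fin n) :
    fourCycleBip n i i' j j' (Sum.inl i1, Sum.inr j2)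
      = (if i = i1 ∧ j = j2 then 1 else 0) - (if i = i1 ∧ j' = j2 then 1 else 0)
        - (if i' = i1 ∧ j = j2 then 1 else 0) + (if i' = i1 ∧ j' = j2 then 1 else 0) := by
  simp only [fourCycleBip, dedge, Pi.add_apply, Prod.mk.injEq, Sum.inl.injEq,
    Sum.inr.injEq, reduceCtorEq, and_false, false_and, if_false]
  by_cases h1 : i = i1 <;> by_cases h2 : j = j2 <;> by_cases h3 : i' = i1 <;>
    by_cases h4 : j' = j2 <;>
      simp [h1, h2, h3, h4, eq_comm] <;> split_ifs <;> first | ring1 | (subst_vars; tauto)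

set_option maxHeartbeats 800000 in
/-- In `K_{n,n}`, every element of the cycle space (an antisymmetric integer
edge chain supported on the edges of the graph and killed by the boundary map) is an integer
linear combination of 4-cycles `i → j → i' → j' → i`. -/
theorem stmt13 (n : ℕ) (c : BipVtx n × BipVtx n → ℤ)
    (hanti : ∀ u v, c (v, u) = -c (u, v))
    (hsupp : ∀ i i' : Fin n,
      c (Sum.inl i, Sum.inl i') = 0 ∧ c (Sum.inr i, Sum.inr i') = 0)
    (hbd : chainBoundary c = 0) :
    c ∈ Submodule.span ℤ
      {d : BipVtx n × BipVtx n → ℤ | ∃ i i' j j', d = fourCycleBip n i i' j j'} := by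
  rcases Nat.eq_zero_or_pos n with h0 | hn
  · subst h0
    have hc : c = 0 := by
      funext e
      rcases e.1 with i | i <;> exact absurd i.2 (by omega)
    rw [hc]
    exact Submodule.zero_mem _
  · set i0 : Fin n := ⟨0, hn⟩ with hi0
    set a : Fin n → Fin n → ℤ := fun i j => c (Sum.inl i, Sum.inr j) with ha
    have hrow : ∀ i, ∑ j, a i j = 0 := by
      intro i
      have h := congrFun hbd (Sum.inl i)
      simp only [chainBoundary, Fintype.sum_sum_type, Pi.zero_apply] at h
      have h1 : ∑ i' : Fin n, c (Sum.inl i', Sum.inl i) = 0 :=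
        Finset.sum_eq_zero fun i' _ => (hsupp i' i).1
      have h2 : ∀ j : Fin n, c (Sum.inr j, Sum.inl i) = -(a i j) := fun j => hanti _ _
      rw [h1] at h
      simp only [h2, Finset.sum_neg_distrib] at h
      linarith
    have hcol : ∀ j, ∑ i, a i j = 0 := by
      intro j
      have h := congrFun hbd (Sum.inr j)
      simp only [chainBoundary, Fintype.sum_sum_type, Pi.zero_apply] at h
      have h1 : ∑ j' : Fin n, c (Sum.inr j', Sum.inr j) = 0 :=
        Finset.sum_eq_zero fun j' _ => (hsupp j' j).2
      rw [h1] at h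
      simpa using h
    have keyval : ∀ i1 j2 : Fin n,
        ∑ i, ∑ j, a i j * fourCycleBip n i i0 j i0 (Sum.inl i1, Sum.inr j2) = a i1 j2 := by
      intro i1 j2
      simp only [four_lr, mul_sub, mul_add, Finset.sum_sub_distrib, Finset.sum_add_distrib,
        mul_ite, mul_one, mul_zero]
      have S1 : ∑ i, ∑ j, (if i = i1 ∧ j = j2 then a i j else 0) = a i1 j2 := by
        simp [ite_and, Finset.sum_ite_eq']
      have S2 : ∑ i, ∑ j, (if i = i1 ∧ i0 = j2 then a i j else 0) = 0 := by
        rcases eq_or_ne i0 j2 with h | h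
        · simp [h, Finset.sum_ite_eq', hrow]
        · simp [h]
      have S3 : ∑ i, ∑ j, (if i0 = i1 ∧ j = j2 then a i j else 0) = 0 := by
        rcases eq_or_ne i0 i1 with h | h
        · simp [h, Finset.sum_ite_eq', hcol]
        · simp [h]
      have S4 : ∑ i : Fin n, ∑ j : Fin n, (if i0 = i1 ∧ i0 = j2 then a i j else 0) = 0 := by
        rcases eq_or_ne i0 i1 with h | h
        · rcases eq_or_ne i0 j2 with h' | h'
          · simp [h, h', hrow]
          · simp [h']
        · simp [h]
      rw [S1, S2, S3, S4]
      ring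
    have key : c = ∑ i, ∑ j, a i j • fourCycleBip n i i0 j i0 := by
      funext e
      obtain ⟨u, v⟩ := e
      simp only [Finset.sum_apply, Pi.smul_apply, smul_eq_mul]
      rcases u with i1 | j1 <;> rcases v with i2 | j2
      · rw [(hsupp i1 i2).1]
        exact (Finset.sum_eq_zero fun i _ => Finset.sum_eq_zero fun j _ => by
          rw [four_ll]; ring).symm
      · exact (keyval i1 j2).symm
      · rw [hanti]
        have hstep : ∑ i, ∑ j, a i j * fourCycleBip n i i0 j i0 (Sum.inr j1, Sum.inl i2)
            = -∑ i, ∑ j, a i j * fourCycleBip n i i0 j i0 (Sum.inl i2, Sum.inr j1) := by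
          simp only [four_rl, four_lr, mul_neg, Finset.sum_neg_distrib]
        rw [hstep, keyval i2 j1]
      · rw [(hsupp j1 j2).2]
        exact (Finset.sum_eq_zero fun i _ => Finset.sum_eq_zero fun j _ => by
          rw [four_rr]; ring).symm
    rw [key]
    exact Submodule.sum_mem _ fun i _ => Submodule.sum_mem _ fun j _ =>
      Submodule.smul_mem _ _ (Submodule.subset_span ⟨i, i0, j, i0, rfl⟩)
end

section
/- In the complete tripartite graph K_{n,n,n}, every cycle is an integer linear combination of 3-cycles i → j → k → i (one vertex from each part) and 4-cycles i → j → i' → j' → i (vertices from exactly two parts). -/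
/-- Vertices of the complete tripartite graph `K_{n,n,n}`. -/
abbrev TriVtx (n : ℕ) := Fin n ⊕ Fin n ⊕ Fin n

/-- The part (one of three) that a vertex of `K_{n,n,n}` belongs to. -/
def triPart {n : ℕ} : TriVtx n → Fin 3 :=
  Sum.elim (fun _ => 0) (Sum.elim (fun _ => 1) (fun _ => 2))

namespace S14
variable {n : ℕ}
def i0 (a : Fin n) : TriVtx n := Sum.inl a
def i1 (a : Fin n) : TriVtx n := Sum.inr (Sum.inl a)
def i2 (a : Fin n) : TriVtx n := Sum.inr (Sum.inr a)

@[simp] lemma i0_inj (a b : Fin n) : (i0 a = i0 b) ↔ a = b := by simp [i0]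
@[simp] lemma i1_inj (a b : Fin n) : (i1 a = i1 b) ↔ a = b := by simp [i1]
@[simp] lemma i2_inj (a b : Fin n) : (i2 a = i2 b) ↔ a = b := by simp [i2]
@[simp] lemma i0_ne_i1 (a b : Fin n) : i0 a ≠ i1 b := by simp [i0, i1]
@[simp] lemma i0_ne_i2 (a b : Fin n) : i0 a ≠ i2 b := by simp [i0, i2]
@[simp] lemma i1_ne_i0 (a b : Fin n) : i1 a ≠ i0 b := by simp [i0, i1]
@[simp] lemma i1_ne_i2 (a b : Fin n) : i1 a ≠ i2 b := by simp [i1, i2]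
@[simp] lemma i2_ne_i0 (a b : Fin n) : i2 a ≠ i0 b := by simp [i0, i2]
@[simp] lemma i2_ne_i1 (a b : Fin n) : i2 a ≠ i1 b := by simp [i1, i2]

lemma dedge_rev {V : Type*} [DecidableEq V] {a b : V} (h : a ≠ b) (s t : V) :
    dedge a b (s, t) + dedge a b (t, s) = 0 := by
  simp only [dedge, Prod.mk.injEq]
  split_ifs <;> simp_all

lemma sum_pair_zero {α β : Type*} (sa : Finset α) (sb : Finset β) (f g : α → β → ℤ)
    (h : ∀ a b, f a b + g a b = 0) :
    (∑ a ∈ sa, ∑ b ∈ sb, f a b) + (∑ a ∈ sa, ∑ b ∈ sb, g a b) = 0 := by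
  rw [← Finset.sum_add_distrib]
  simp only [← Finset.sum_add_distrib]
  simp [h]

def S (m : ℕ) (c : TriVtx (m+1) × TriVtx (m+1) → ℤ) : TriVtx (m+1) × TriVtx (m+1) → ℤ :=
  (∑ u : Fin (m+1), ∑ v : Fin (m+1),
      c (i1 u, i2 v) • (dedge (i1 u) (i2 v) + dedge (i2 v) (i0 0) + dedge (i0 0) (i1 u)))
  + (∑ y ∈ Finset.univ.erase (0 : Fin (m+1)), ∑ x ∈ Finset.univ.erase (0 : Fin (m+1)),
      c (i0 y, i1 x) • (dedge (i0 y) (i1 x) + dedge (i1 x) (i0 0) + dedge (i0 0) (i1 0)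
        + dedge (i1 0) (i0 y)))
  + (∑ y ∈ Finset.univ.erase (0 : Fin (m+1)), ∑ x : Fin (m+1),
      c (i0 y, i2 x) • (dedge (i0 y) (i2 x) + dedge (i2 x) (i0 0) + dedge (i0 0) (i1 0)
        + dedge (i1 0) (i0 y)))


lemma S_swap (m : ℕ) (c : TriVtx (m+1) × TriVtx (m+1) → ℤ) (s t : TriVtx (m+1)) :
    S m c (t, s) = - S m c (s, t) := by
  rw [eq_neg_iff_add_eq_zero]
  simp only [S, Pi.add_apply, Finset.sum_apply, Pi.smul_apply, smul_eq_mul]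
  have h1 := sum_pair_zero (Finset.univ : Finset (Fin (m+1))) Finset.univ
    (fun u v => c (i1 u, i2 v) * (dedge (i1 u) (i2 v) (t, s) + dedge (i2 v) (i0 0) (t, s) + dedge (i0 0) (i1 u) (t, s)))
    (fun u v => c (i1 u, i2 v) * (dedge (i1 u) (i2 v) (s, t) + dedge (i2 v) (i0 0) (s, t) + dedge (i0 0) (i1 u) (s, t)))
    (by intro u v
        have a1 := dedge_rev (i1_ne_i2 u v) t s
        have a2 := dedge_rev (i2_ne_i0 v 0) t s
        have a3 := dedge_rev (i0_ne_i1 0 u) t s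
        linear_combination c (i1 u, i2 v) * (a1 + a2 + a3))
  have h2 := sum_pair_zero (Finset.univ.erase (0 : Fin (m+1))) (Finset.univ.erase (0 : Fin (m+1)))
    (fun y x => c (i0 y, i1 x) * (dedge (i0 y) (i1 x) (t, s) + dedge (i1 x) (i0 0) (t, s) + dedge (i0 0) (i1 0) (t, s) + dedge (i1 0) (i0 y) (t, s)))
    (fun y x => c (i0 y, i1 x) * (dedge (i0 y) (i1 x) (s, t) + dedge (i1 x) (i0 0) (s, t) + dedge (i0 0) (i1 0) (s, t) + dedge (i1 0) (i0 y) (s, t)))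
    (by intro y x
        have a1 := dedge_rev (i0_ne_i1 y x) t s
        have a2 := dedge_rev (i1_ne_i0 x 0) t s
        have a3 := dedge_rev (i0_ne_i1 (0 : Fin (m+1)) 0) t s
        have a4 := dedge_rev (i1_ne_i0 (0 : Fin (m+1)) y) t s
        linear_combination c (i0 y, i1 x) * (a1 + a2 + a3 + a4))
  have h3 := sum_pair_zero (Finset.univ.erase (0 : Fin (m+1))) (Finset.univ : Finset (Fin (m+1)))
    (fun y x => c (i0 y, i2 x) * (dedge (i0 y) (i2 x) (t, s) + dedge (i2 x) (i0 0) (t, s) + dedge (i0 0) (i1 0) (t, s) + dedge (i1 0) (i0 y) (t, s)))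
    (fun y x => c (i0 y, i2 x) * (dedge (i0 y) (i2 x) (s, t) + dedge (i2 x) (i0 0) (s, t) + dedge (i0 0) (i1 0) (s, t) + dedge (i1 0) (i0 y) (s, t)))
    (by intro y x
        have a1 := dedge_rev (i0_ne_i2 y x) t s
        have a2 := dedge_rev (i2_ne_i0 x 0) t s
        have a3 := dedge_rev (i0_ne_i1 (0 : Fin (m+1)) 0) t s
        have a4 := dedge_rev (i1_ne_i0 (0 : Fin (m+1)) y) t s
        linear_combination c (i0 y, i2 x) * (a1 + a2 + a3 + a4))
  linarith [h1, h2, h3]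


@[simp] lemma triPart_i0 (a : Fin n) : triPart (i0 a) = 0 := rfl
@[simp] lemma triPart_i1 (a : Fin n) : triPart (i1 a) = 1 := rfl
@[simp] lemma triPart_i2 (a : Fin n) : triPart (i2 a) = 2 := rfl

lemma dedge_apply_same {V : Type*} [DecidableEq V] {P : Type*} (f : V → P)
    {a b s t : V} (hab : f a ≠ f b) (hst : f s = f t) : dedge a b (s, t) = 0 := by
  simp only [dedge, Prod.mk.injEq]
  split_ifs with h1 h2 <;> try rfl
  · exact absurd (h1.1 ▸ h1.2 ▸ hst) hab
  · exact absurd (h2.1 ▸ h2.2 ▸ hst.symm) hab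

example (m : ℕ) (c : TriVtx (m+1) × TriVtx (m+1) → ℤ) (p q : Fin (m+1)) :
    c (i1 p, i2 q) = S m c (i1 p, i2 q) := by
  simp [S, Finset.sum_apply, dedge, Prod.ext_iff, ite_and, i0, i1, i2]

lemma fin3_12 : (1 : Fin 3) ≠ 2 := by decide

section Main
variable {m : ℕ} (c : TriVtx (m+1) × TriVtx (m+1) → ℤ)

set_option maxHeartbeats 1000000

lemma mainC (p q : Fin (m+1)) : c (i1 p, i2 q) = S m c (i1 p, i2 q) := by
  simp [S, Finset.sum_apply, dedge, Prod.ext_iff, ite_and, i0, i1, i2]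

variable (hanti : ∀ u v, c (v, u) = -c (u, v))
  (hsupp : ∀ u v : TriVtx (m+1), triPart u = triPart v → c (u, v) = 0)
  (hb : ∀ t : TriVtx (m+1), (∑ y : Fin (m+1), c (Sum.inl y, t)) +
      ((∑ u : Fin (m+1), c (Sum.inr (Sum.inl u), t)) +
       (∑ v : Fin (m+1), c (Sum.inr (Sum.inr v), t))) = 0)

include hanti hsupp hb

lemma hrow (y : Fin (m+1)) : (∑ x : Fin (m+1), c (Sum.inl y, Sum.inr (Sum.inl x))) +
    (∑ x : Fin (m+1), c (Sum.inl y, Sum.inr (Sum.inr x))) = 0 := by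
  have h := hb (Sum.inl y)
  have h0 : ∑ x : Fin (m+1), c (Sum.inl x, Sum.inl y) = 0 :=
    Finset.sum_eq_zero fun x _ => hsupp _ _ rfl
  have e1 : (∑ x : Fin (m+1), c (Sum.inl y, Sum.inr (Sum.inl x)))
      = - ∑ x : Fin (m+1), c (Sum.inr (Sum.inl x), Sum.inl y) := by
    rw [← Finset.sum_neg_distrib]
    exact Finset.sum_congr rfl fun x _ => by rw [hanti]
  have e2 : (∑ x : Fin (m+1), c (Sum.inl y, Sum.inr (Sum.inr x)))
      = - ∑ x : Fin (m+1), c (Sum.inr (Sum.inr x), Sum.inl y) := by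
    rw [← Finset.sum_neg_distrib]
    exact Finset.sum_congr rfl fun x _ => by rw [hanti]
  linarith [h, h0, e1, e2]

lemma mainA00 : c (i0 0, i1 0) = S m c (i0 0, i1 0) := by
  simp [S, Finset.sum_apply, dedge, Prod.ext_iff, ite_and, i0, i1, i2,
    Finset.sum_add_distrib, Finset.sum_ite_eq]
  have hdd : (∑ x : Fin (m+1), ∑ x1 : Fin (m+1), c (Sum.inl x, Sum.inr (Sum.inl x1))) +
      (∑ x : Fin (m+1), ∑ x1 : Fin (m+1), c (Sum.inl x, Sum.inr (Sum.inr x1))) = 0 := by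
    rw [← Finset.sum_add_distrib]
    exact Finset.sum_eq_zero fun y _ => hrow c hanti hsupp hb y
  have h6 := hrow c hanti hsupp hb 0
  have hb0 := hb (Sum.inr (Sum.inl 0))
  have h0 : ∑ x : Fin (m+1), c (Sum.inr (Sum.inl x), Sum.inr (Sum.inl 0)) = 0 :=
    Finset.sum_eq_zero fun x _ => hsupp _ _ rfl
  have e2 : (∑ x : Fin (m+1), c (Sum.inr (Sum.inl 0), Sum.inr (Sum.inr x)))
      = - ∑ x : Fin (m+1), c (Sum.inr (Sum.inr x), Sum.inr (Sum.inl 0)) := by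
    rw [← Finset.sum_neg_distrib]
    exact Finset.sum_congr rfl fun x _ => by rw [hanti]
  linarith [hdd, h6, hb0, h0, e2]

lemma mainA0q (q : Fin (m+1)) (hq : q ≠ 0) : c (i0 0, i1 q) = S m c (i0 0, i1 q) := by
  simp [S, Finset.sum_apply, dedge, Prod.ext_iff, ite_and, i0, i1, i2, hq,
    Finset.sum_add_distrib, Finset.sum_ite_eq]
  have h1 : (∑ u : Fin (m+1), c (Sum.inr (Sum.inl u), Sum.inr (Sum.inl q))) = 0 :=
    Finset.sum_eq_zero fun u _ => hsupp _ _ rfl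
  have h2 : (∑ x : Fin (m+1), c (Sum.inr (Sum.inl q), Sum.inr (Sum.inr x)))
      = - ∑ x : Fin (m+1), c (Sum.inr (Sum.inr x), Sum.inr (Sum.inl q)) := by
    rw [← Finset.sum_neg_distrib]
    exact Finset.sum_congr rfl fun x _ => by rw [hanti]
  have h3 := hb (Sum.inr (Sum.inl q))
  linarith [h1, h2, h3]

lemma mainAp0 (p : Fin (m+1)) (hp : p ≠ 0) : c (i0 p, i1 0) = S m c (i0 p, i1 0) := by
  simp [S, Finset.sum_apply, dedge, Prod.ext_iff, ite_and, i0, i1, i2, hp,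
    Finset.sum_add_distrib, Finset.sum_ite_eq]
  linarith [hrow c hanti hsupp hb p]

lemma mainApq (p q : Fin (m+1)) (hp : p ≠ 0) (hq : q ≠ 0) :
    c (i0 p, i1 q) = S m c (i0 p, i1 q) := by
  simp [S, Finset.sum_apply, dedge, Prod.ext_iff, ite_and, i0, i1, i2, hp, hq]

lemma mainB0 (q : Fin (m+1)) : c (i0 0, i2 q) = S m c (i0 0, i2 q) := by
  simp [S, Finset.sum_apply, dedge, Prod.ext_iff, ite_and, i0, i1, i2,
    Finset.sum_add_distrib, Finset.sum_ite_eq]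
  have h0 : ∑ x : Fin (m+1), c (Sum.inr (Sum.inr x), Sum.inr (Sum.inr q)) = 0 :=
    Finset.sum_eq_zero fun x _ => hsupp _ _ rfl
  have h3 := hb (Sum.inr (Sum.inr q))
  linarith [h0, h3]

lemma mainBp (p q : Fin (m+1)) (hp : p ≠ 0) : c (i0 p, i2 q) = S m c (i0 p, i2 q) := by
  simp [S, Finset.sum_apply, dedge, Prod.ext_iff, ite_and, i0, i1, i2, hp,
    Finset.sum_add_distrib, Finset.sum_ite_eq]

end Main

lemma sameCase {m : ℕ} (c : TriVtx (m+1) × TriVtx (m+1) → ℤ)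
    (hsupp : ∀ u v : TriVtx (m+1), triPart u = triPart v → c (u, v) = 0)
    (s t : TriVtx (m+1)) (hst : triPart s = triPart t) :
    c (s, t) = S m c (s, t) := by
  rw [hsupp s t hst]
  symm
  simp only [S, Pi.add_apply, Finset.sum_apply, Pi.smul_apply, smul_eq_mul]
  have z : ∀ (a b : TriVtx (m+1)), triPart a ≠ triPart b → dedge a b (s, t) = 0 :=
    fun a b hab => dedge_apply_same triPart hab hst
  have Z1 : (∑ u : Fin (m+1), ∑ v : Fin (m+1), c (i1 u, i2 v) *
      (dedge (i1 u) (i2 v) (s, t) + dedge (i2 v) (i0 0) (s, t) + dedge (i0 0) (i1 u) (s, t))) = 0 :=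
    Finset.sum_eq_zero fun u _ => Finset.sum_eq_zero fun v _ => by
      rw [z _ _ (by simp), z _ _ (by simp), z _ _ (by simp)]; ring
  have Z2 : (∑ y ∈ Finset.univ.erase (0 : Fin (m+1)), ∑ x ∈ Finset.univ.erase (0 : Fin (m+1)),
      c (i0 y, i1 x) * (dedge (i0 y) (i1 x) (s, t) + dedge (i1 x) (i0 0) (s, t)
        + dedge (i0 0) (i1 0) (s, t) + dedge (i1 0) (i0 y) (s, t))) = 0 :=
    Finset.sum_eq_zero fun y _ => Finset.sum_eq_zero fun x _ => by
      rw [z _ _ (by simp), z _ _ (by simp), z _ _ (by simp),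
        z _ _ (by simp)]; ring
  have Z3 : (∑ y ∈ Finset.univ.erase (0 : Fin (m+1)), ∑ x : Fin (m+1),
      c (i0 y, i2 x) * (dedge (i0 y) (i2 x) (s, t) + dedge (i2 x) (i0 0) (s, t)
        + dedge (i0 0) (i1 0) (s, t) + dedge (i1 0) (i0 y) (s, t))) = 0 :=
    Finset.sum_eq_zero fun y _ => Finset.sum_eq_zero fun x _ => by
      rw [z _ _ (by simp), z _ _ (by simp), z _ _ (by simp),
        z _ _ (by simp)]; ring
  linarith [Z1, Z2, Z3]

lemma key (m : ℕ) (c : TriVtx (m+1) × TriVtx (m+1) → ℤ)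
    (hanti : ∀ u v, c (v, u) = -c (u, v))
    (hsupp : ∀ u v : TriVtx (m+1), triPart u = triPart v → c (u, v) = 0)
    (hbd : chainBoundary c = 0) : c = S m c := by
  have hb : ∀ t : TriVtx (m+1), (∑ y : Fin (m+1), c (Sum.inl y, t)) +
      ((∑ u : Fin (m+1), c (Sum.inr (Sum.inl u), t)) +
       (∑ v : Fin (m+1), c (Sum.inr (Sum.inr v), t))) = 0 := by
    intro t
    have h := congrFun hbd t
    simpa [chainBoundary, Fintype.sum_sum_type] using h
  have mainA : ∀ p q : Fin (m+1), c (i0 p, i1 q) = S m c (i0 p, i1 q) := by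
    intro p q
    by_cases hp : p = 0 <;> by_cases hq : q = 0
    · subst hp; subst hq; exact mainA00 c hanti hsupp hb
    · subst hp; exact mainA0q c hanti hsupp hb q hq
    · subst hq; exact mainAp0 c hanti hsupp hb p hp
    · exact mainApq c hanti hsupp hb p q hp hq
  have mainB : ∀ p q : Fin (m+1), c (i0 p, i2 q) = S m c (i0 p, i2 q) := by
    intro p q
    by_cases hp : p = 0
    · subst hp; exact mainB0 c hanti hsupp hb q
    · exact mainBp c hanti hsupp hb p q hp
  have rev : ∀ s t : TriVtx (m+1), c (s, t) = S m c (s, t) → c (t, s) = S m c (t, s) := by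
    intro s t h
    rw [hanti, h, S_swap]; exact neg_neg _
  funext e
  obtain ⟨s, t⟩ := e
  rcases s with p | p | p <;> rcases t with q | q | q
  · exact sameCase c hsupp _ _ rfl
  · exact mainA p q
  · exact mainB p q
  · exact rev _ _ (mainA q p)
  · exact sameCase c hsupp _ _ rfl
  · exact mainC c p q
  · exact rev _ _ (mainB q p)
  · exact rev _ _ (mainC c q p)
  · exact sameCase c hsupp _ _ rfl

end S14

lemma dedge_cancel {V : Type*} [DecidableEq V] {a b : V} (h : a ≠ b) :
    dedge a b + dedge b a = 0 := by
  funext e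
  simp only [dedge, Pi.add_apply, Pi.zero_apply]
  split_ifs <;> simp_all


open S14

/-- In `K_{n,n,n}`, every element of the cycle space (an antisymmetric integer
edge chain supported on the edges of the graph, i.e. on pairs of vertices from different
parts, and killed by the boundary map) is an integer linear combination of 3-cycles
`a → b → c → a` with one vertex in each part and of 4-cycles `a → b → a' → b' → a` with
vertices from exactly two parts. -/
theorem stmt14 (n : ℕ) (c : TriVtx n × TriVtx n → ℤ)
    (hanti : ∀ u v, c (v, u) = -c (u, v))
    (hsupp : ∀ u v : TriVtx n, triPart u = triPart v → c (u, v) = 0)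
    (hbd : chainBoundary c = 0) :
    c ∈ Submodule.span ℤ
      ({d : TriVtx n × TriVtx n → ℤ |
          ∃ a b e : TriVtx n, triPart a ≠ triPart b ∧ triPart b ≠ triPart e ∧
            triPart a ≠ triPart e ∧ d = dedge a b + dedge b e + dedge e a} ∪
        {d : TriVtx n × TriVtx n → ℤ |
          ∃ a a' b b' : TriVtx n, triPart a = triPart a' ∧ triPart b = triPart b' ∧
            triPart a ≠ triPart b ∧
            d = dedge a b + dedge b a' + dedge a' b' + dedge b' a}) := by
  obtain _ | m := n
  · have hc : c = 0 := by
      funext e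
      obtain ⟨s, t⟩ := e
      rcases s with a | a | a <;> exact a.elim0
    rw [hc]; exact Submodule.zero_mem _
  rw [S14.key m c hanti hsupp hbd]
  unfold S14.S
  refine Submodule.add_mem _ (Submodule.add_mem _ ?_ ?_) ?_
  · refine Submodule.sum_mem _ fun u _ => Submodule.sum_mem _ fun v _ =>
      Submodule.smul_mem _ _ (Submodule.subset_span (Set.mem_union_left _
        ⟨i1 u, i2 v, i0 0, by simp, by simp, by simp, rfl⟩))
  · refine Submodule.sum_mem _ fun y _ => Submodule.sum_mem _ fun x _ =>
      Submodule.smul_mem _ _ (Submodule.subset_span (Set.mem_union_right _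
        ⟨i0 y, i0 0, i1 x, i1 0, by simp, by simp, by simp, rfl⟩))
  · refine Submodule.sum_mem _ fun y _ => Submodule.sum_mem _ fun x _ =>
      Submodule.smul_mem _ _ ?_
    have hsplit : dedge (i0 y) (i2 x) + dedge (i2 x) (i0 0) + dedge (i0 0) (i1 0)
          + dedge (i1 0) (i0 y)
        = (dedge (i0 y) (i2 x) + dedge (i2 x) (i1 0) + dedge (i1 0) (i0 y))
          + (dedge (i1 0) (i2 x) + dedge (i2 x) (i0 0) + dedge (i0 0) (i1 0)) := by
      have h := dedge_cancel (i2_ne_i1 x (0 : Fin (m+1)))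
      funext e
      have := congrFun h e
      simp only [Pi.add_apply, Pi.zero_apply] at this ⊢
      linarith
    rw [hsplit]
    exact Submodule.add_mem _
      (Submodule.subset_span (Set.mem_union_left _
        ⟨i0 y, i2 x, i1 0, by simp, by simp, by simp, rfl⟩))
      (Submodule.subset_span (Set.mem_union_left _
        ⟨i1 0, i2 x, i0 0, by simp, by simp, by simp, rfl⟩))
end

section
/- Let V, W, U, V', W', U' be m-dimensional subspaces of ℂ^n. Suppose there are principal bases for each pair within each triple such that all pairwise principal angles agree (θ_i(V,W) = θ_i(V',W') etc.) and all principal-unitary matrix entries agree: ⟨v_i^W, v_k^U⟩ = ⟨v'_i^{W'}, v'_k^{U'}⟩, ⟨w_i^V, w_k^U⟩ = ⟨w'_i^{V'}, w'_k^{U'}⟩, ⟨u_k^V, u_j^W⟩ = ⟨u'_k^{V'}, u'_j^{W'}⟩. Then there exists a unitary U_0 on ℂ^n mapping V, W, U onto V', W', U' respectively. -/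
/-!
A family of vectors is determined up to a unitary of `ℂⁿ` by its Gram matrix, and the unitary
then maps the span of the family onto the span of its image. So it suffices to show that the
families `vW`, `wV`, `uW` (spanning `V`, `W`, `U`) have the same Gram matrix as their primed
counterparts. The diagonal blocks are identity matrices, `⟪vW, wV⟫` is the common cosine
diagonal, and the other blocks are products of the given matrices, obtained by expanding in a
second principal basis of the same subspace:
`⟪w^V, u^W⟫ = ⟪w^V, w^U⟫ ⟪w^U, u^W⟫` and `⟪v^W, u^W⟫ = ⟪v^W, v^U⟫ ⟪v^U, u^V⟫ ⟪u^V, u^W⟫`.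
-/

open Submodule Set
open scoped InnerProductSpace

variable {𝕜 E ι : Type*} [RCLike 𝕜] [NormedAddCommGroup E] [InnerProductSpace 𝕜 E]

theorem Orthonormal.inner_eq_sum_inner_mul_inner_of_mem_left [Fintype ι] {b : ι → E}
    (hb : Orthonormal 𝕜 b) {x : E} (hx : x ∈ span 𝕜 (range b)) (y : E) :
    ⟪x, y⟫_𝕜 = ∑ i, ⟪x, b i⟫_𝕜 * ⟪b i, y⟫_𝕜 := by
  obtain ⟨c, rfl⟩ := mem_span_range_iff_exists_fun 𝕜 |>.mp hx
  simp only [sum_inner, inner_smul_left, hb.inner_left_fintype]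

theorem Orthonormal.inner_eq_sum_inner_mul_inner_of_mem_right [Fintype ι] {b : ι → E}
    (hb : Orthonormal 𝕜 b) (x : E) {y : E} (hy : y ∈ span 𝕜 (range b)) :
    ⟪x, y⟫_𝕜 = ∑ i, ⟪x, b i⟫_𝕜 * ⟪b i, y⟫_𝕜 := by
  rw [← inner_conj_symm, hb.inner_eq_sum_inner_mul_inner_of_mem_left hy, map_sum]
  simp only [map_mul, inner_conj_symm, mul_comm]

theorem Orthonormal.inner_eq_inner_of_mem_span_left [Fintype ι] {b b' : ι → E}
    (hb : Orthonormal 𝕜 b) (hb' : Orthonormal 𝕜 b') {x x' y y' : E}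
    (hx : x ∈ span 𝕜 (range b)) (hx' : x' ∈ span 𝕜 (range b'))
    (hxb : ∀ i, ⟪x, b i⟫_𝕜 = ⟪x', b' i⟫_𝕜) (hby : ∀ i, ⟪b i, y⟫_𝕜 = ⟪b' i, y'⟫_𝕜) :
    ⟪x, y⟫_𝕜 = ⟪x', y'⟫_𝕜 := by
  rw [hb.inner_eq_sum_inner_mul_inner_of_mem_left hx,
    hb'.inner_eq_sum_inner_mul_inner_of_mem_left hx']
  simp only [hxb, hby]

theorem Orthonormal.inner_eq_inner_of_mem_span_right [Fintype ι] {b b' : ι → E}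
    (hb : Orthonormal 𝕜 b) (hb' : Orthonormal 𝕜 b') {x x' y y' : E}
    (hy : y ∈ span 𝕜 (range b)) (hy' : y' ∈ span 𝕜 (range b'))
    (hxb : ∀ i, ⟪x, b i⟫_𝕜 = ⟪x', b' i⟫_𝕜) (hby : ∀ i, ⟪b i, y⟫_𝕜 = ⟪b' i, y'⟫_𝕜) :
    ⟪x, y⟫_𝕜 = ⟪x', y'⟫_𝕜 := by
  rw [hb.inner_eq_sum_inner_mul_inner_of_mem_right x hy,
    hb'.inner_eq_sum_inner_mul_inner_of_mem_right x' hy']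
  simp only [hxb, hby]

theorem Orthonormal.inner_eq_inner {b b' : ι → E} (hb : Orthonormal 𝕜 b)
    (hb' : Orthonormal 𝕜 b') (i j : ι) : ⟪b i, b j⟫_𝕜 = ⟪b' i, b' j⟫_𝕜 := by
  classical
  rw [orthonormal_iff_ite.mp hb, orthonormal_iff_ite.mp hb']

theorem Fintype.inner_linearCombination_eq_of_inner_eq [Fintype ι] {f g : ι → E}
    (h : ∀ i j, ⟪f i, f j⟫_𝕜 = ⟪g i, g j⟫_𝕜) (c d : ι → 𝕜) :
    ⟪Fintype.linearCombination 𝕜 f c, Fintype.linearCombination 𝕜 f d⟫_𝕜 =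
      ⟪Fintype.linearCombination 𝕜 g c, Fintype.linearCombination 𝕜 g d⟫_𝕜 := by
  simp only [Fintype.linearCombination_apply, sum_inner, inner_sum, inner_smul_left,
    inner_smul_right, h]

theorem exists_linearIsometryEquiv_apply_eq_of_inner_eq [FiniteDimensional 𝕜 E] [Fintype ι]
    {f g : ι → E} (h : ∀ i j, ⟪f i, f j⟫_𝕜 = ⟪g i, g j⟫_𝕜) :
    ∃ T : E ≃ₗᵢ[𝕜] E, ∀ i, T (f i) = g i := by
  classical
  set Tf := Fintype.linearCombination 𝕜 f
  set Tg := Fintype.linearCombination 𝕜 g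
  have hinner := Fintype.inner_linearCombination_eq_of_inner_eq h
  have hker : LinearMap.ker Tf ≤ LinearMap.ker Tg := fun c hc => by
    refine (inner_self_eq_zero (𝕜 := 𝕜)).mp ?_
    rw [LinearMap.mem_ker] at hc
    rw [← hinner, hc, inner_zero_left]
  let L : LinearMap.range Tf →ₗ[𝕜] E :=
    (LinearMap.ker Tf).liftQ Tg hker ∘ₗ Tf.quotKerEquivRange.symm.toLinearMap
  have hL : ∀ c, L ⟨Tf c, LinearMap.mem_range_self Tf c⟩ = Tg c := fun c => by
    simp [L]
  have hLinner : ∀ x y, ⟪L x, L y⟫_𝕜 = ⟪x, y⟫_𝕜 := by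
    rintro ⟨_, c, rfl⟩ ⟨_, d, rfl⟩
    rw [hL, hL, coe_inner]
    exact (hinner c d).symm
  refine ⟨(L.isometryOfInner hLinner).extend.toLinearIsometryEquiv rfl, fun i => ?_⟩
  have hfi : Tf (Pi.single i 1) = f i := by simp [Tf]
  have hgi : Tg (Pi.single i 1) = g i := by simp [Tg]
  rw [LinearIsometry.coe_toLinearIsometryEquiv, ← hfi, ← hgi]
  exact (LinearIsometry.extend_apply _ ⟨_, LinearMap.mem_range_self Tf _⟩).trans (hL _)

theorem Sum.inner_elim_eq_of_inner_eq {κ : Type*} {f₁ g₁ : ι → E} {f₂ g₂ : κ → E}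
    (h₁₁ : ∀ i j, ⟪f₁ i, f₁ j⟫_𝕜 = ⟪g₁ i, g₁ j⟫_𝕜) (h₁₂ : ∀ i j, ⟪f₁ i, f₂ j⟫_𝕜 = ⟪g₁ i, g₂ j⟫_𝕜)
    (h₂₂ : ∀ i j, ⟪f₂ i, f₂ j⟫_𝕜 = ⟪g₂ i, g₂ j⟫_𝕜) :
    ∀ p q, ⟪Sum.elim f₁ f₂ p, Sum.elim f₁ f₂ q⟫_𝕜 = ⟪Sum.elim g₁ g₂ p, Sum.elim g₁ g₂ q⟫_𝕜
  | .inl i, .inl j => h₁₁ i j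
  | .inl i, .inr j => h₁₂ i j
  | .inr i, .inl j => by
    rw [Sum.elim_inr, Sum.elim_inl, ← inner_conj_symm, h₁₂, inner_conj_symm]
    rfl
  | .inr i, .inr j => h₂₂ i j

theorem Submodule.map_span_range_of_apply_eq {R M N : Type*} [Semiring R] [AddCommMonoid M]
    [AddCommMonoid N] [Module R M] [Module R N] (φ : M →ₗ[R] N) {f : ι → M} {g : ι → N}
    (h : ∀ i, φ (f i) = g i) : map φ (span R (range f)) = span R (range g) := by
  rw [map_span, ← range_comp]
  exact congrArg _ (congrArg _ (funext h))

theorem stmt17_general (n m : ℕ)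
    (V W U V' W' U' : Submodule ℂ (EuclideanSpace ℂ (Fin n)))
    -- principal bases: two in each subspace, one per other subspace of the triple
    (vW vU wV wU uV uW vW' vU' wV' wU' uV' uW' : Fin m → EuclideanSpace ℂ (Fin n))
    -- common principal angles
    (θVW θVU θWU : Fin m → ℝ)
    -- orthonormality
    (hvW : Orthonormal ℂ vW) (hvU : Orthonormal ℂ vU)
    (hwV : Orthonormal ℂ wV) (hwU : Orthonormal ℂ wU)
    (huV : Orthonormal ℂ uV) (huW : Orthonormal ℂ uW)
    (hvW' : Orthonormal ℂ vW') (hvU' : Orthonormal ℂ vU')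
    (hwV' : Orthonormal ℂ wV') (hwU' : Orthonormal ℂ wU')
    (huV' : Orthonormal ℂ uV') (huW' : Orthonormal ℂ uW')
    -- each family spans its subspace
    (hvWs : Submodule.span ℂ (Set.range vW) = V) (hvUs : Submodule.span ℂ (Set.range vU) = V)
    (hwVs : Submodule.span ℂ (Set.range wV) = W) (hwUs : Submodule.span ℂ (Set.range wU) = W)
    (huVs : Submodule.span ℂ (Set.range uV) = U) (huWs : Submodule.span ℂ (Set.range uW) = U)
    (hvWs' : Submodule.span ℂ (Set.range vW') = V') (hvUs' : Submodule.span ℂ (Set.range vU') = V')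
    (hwVs' : Submodule.span ℂ (Set.range wV') = W') (hwUs' : Submodule.span ℂ (Set.range wU') = W')
    (huVs' : Submodule.span ℂ (Set.range uV') = U') (huWs' : Submodule.span ℂ (Set.range uW') = U')
    -- principal conditions: identical principal angles for both triples
    (hVW : ∀ i j, (inner ℂ (vW i) (wV j) : ℂ) = if i = j then (Real.cos (θVW i) : ℂ) else 0)
    (hVU : ∀ i j, (inner ℂ (vU i) (uV j) : ℂ) = if i = j then (Real.cos (θVU i) : ℂ) else 0)
    (hWU : ∀ i j, (inner ℂ (wU i) (uW j) : ℂ) = if i = j then (Real.cos (θWU i) : ℂ) else 0)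
    (hVW' : ∀ i j, (inner ℂ (vW' i) (wV' j) : ℂ) = if i = j then (Real.cos (θVW i) : ℂ) else 0)
    (hVU' : ∀ i j, (inner ℂ (vU' i) (uV' j) : ℂ) = if i = j then (Real.cos (θVU i) : ℂ) else 0)
    (hWU' : ∀ i j, (inner ℂ (wU' i) (uW' j) : ℂ) = if i = j then (Real.cos (θWU i) : ℂ) else 0)
    -- identical principal unitaries
    (hUniV : ∀ i k, (inner ℂ (vW i) (vU k) : ℂ) = inner ℂ (vW' i) (vU' k))
    (hUniW : ∀ i k, (inner ℂ (wV i) (wU k) : ℂ) = inner ℂ (wV' i) (wU' k))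
    (hUniU : ∀ k j, (inner ℂ (uV k) (uW j) : ℂ) = inner ℂ (uV' k) (uW' j)) :
    ∃ U₀ : EuclideanSpace ℂ (Fin n) ≃ₗᵢ[ℂ] EuclideanSpace ℂ (Fin n),
      Submodule.map (U₀.toLinearEquiv : EuclideanSpace ℂ (Fin n) →ₗ[ℂ] EuclideanSpace ℂ (Fin n)) V = V' ∧
      Submodule.map (U₀.toLinearEquiv : EuclideanSpace ℂ (Fin n) →ₗ[ℂ] EuclideanSpace ℂ (Fin n)) W = W' ∧
      Submodule.map (U₀.toLinearEquiv : EuclideanSpace ℂ (Fin n) →ₗ[ℂ] EuclideanSpace ℂ (Fin n)) U = U' := by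
  have mem_span_of_span_eq : ∀ {a b : Fin m → EuclideanSpace ℂ (Fin n)} {S}, span ℂ (range a) = S →
      span ℂ (range b) = S → ∀ i, a i ∈ span ℂ (range b) := fun ha hb i => by
    rw [hb, ← ha]; exact subset_span ⟨i, rfl⟩
  have hvw : ∀ i j, ⟪vW i, wV j⟫_ℂ = ⟪vW' i, wV' j⟫_ℂ := fun i j => (hVW i j).trans (hVW' i j).symm
  have hwu : ∀ i j, ⟪wV i, uW j⟫_ℂ = ⟪wV' i, uW' j⟫_ℂ := fun i j =>
    hwU.inner_eq_inner_of_mem_span_left hwU' (mem_span_of_span_eq hwVs hwUs i)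
      (mem_span_of_span_eq hwVs' hwUs' i) (hUniW i) fun k => (hWU k j).trans (hWU' k j).symm
  have hvu : ∀ i j, ⟪vW i, uW j⟫_ℂ = ⟪vW' i, uW' j⟫_ℂ := fun i j =>
    hvU.inner_eq_inner_of_mem_span_left hvU' (mem_span_of_span_eq hvWs hvUs i)
      (mem_span_of_span_eq hvWs' hvUs' i) (hUniV i) fun k =>
        huV.inner_eq_inner_of_mem_span_right huV' (mem_span_of_span_eq huWs huVs j)
          (mem_span_of_span_eq huWs' huVs' j) (fun l => (hVU k l).trans (hVU' k l).symm)
          fun l => hUniU l j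
  obtain ⟨T, hT⟩ := exists_linearIsometryEquiv_apply_eq_of_inner_eq
    (Sum.inner_elim_eq_of_inner_eq (hvW.inner_eq_inner hvW')
      (fun i => Sum.rec (hvw i) (hvu i))
      (Sum.inner_elim_eq_of_inner_eq (hwV.inner_eq_inner hwV') hwu (huW.inner_eq_inner huW')))
  refine ⟨T, ?_, ?_, ?_⟩
  · rw [← hvWs, ← hvWs']
    exact map_span_range_of_apply_eq _ fun i => hT (.inl i)
  · rw [← hwVs, ← hwVs']
    exact map_span_range_of_apply_eq _ fun i => hT (.inr (.inl i))
  · rw [← huWs, ← huWs']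
    exact map_span_range_of_apply_eq _ fun i => hT (.inr (.inr i))

/-- Two triples `(V,W,U)` and `(V',W',U')` of `m`-dimensional subspaces of
`ℂ^n` whose pairwise principal angles agree and whose principal unitaries (overlap matrices
between the two induced principal bases in each subspace) agree are related by a unitary of
`ℂ^n` mapping `V, W, U` onto `V', W', U'` respectively. -/
theorem stmt17 (n m : ℕ)
    (V W U V' W' U' : Submodule ℂ (EuclideanSpace ℂ (Fin n)))
    -- principal bases: two in each subspace, one per other subspace of the triple
    (vW vU wV wU uV uW vW' vU' wV' wU' uV' uW' : Fin m → EuclideanSpace ℂ (Fin n))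
    -- common principal angles
    (θVW θVU θWU : Fin m → ℝ)
    (hθVW : ∀ i, θVW i ∈ Set.Icc (0 : ℝ) (Real.pi / 2))
    (hθVU : ∀ i, θVU i ∈ Set.Icc (0 : ℝ) (Real.pi / 2))
    (hθWU : ∀ i, θWU i ∈ Set.Icc (0 : ℝ) (Real.pi / 2))
    -- orthonormality
    (hvW : Orthonormal ℂ vW) (hvU : Orthonormal ℂ vU)
    (hwV : Orthonormal ℂ wV) (hwU : Orthonormal ℂ wU)
    (huV : Orthonormal ℂ uV) (huW : Orthonormal ℂ uW)
    (hvW' : Orthonormal ℂ vW') (hvU' : Orthonormal ℂ vU')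
    (hwV' : Orthonormal ℂ wV') (hwU' : Orthonormal ℂ wU')
    (huV' : Orthonormal ℂ uV') (huW' : Orthonormal ℂ uW')
    -- each family spans its subspace
    (hvWs : Submodule.span ℂ (Set.range vW) = V) (hvUs : Submodule.span ℂ (Set.range vU) = V)
    (hwVs : Submodule.span ℂ (Set.range wV) = W) (hwUs : Submodule.span ℂ (Set.range wU) = W)
    (huVs : Submodule.span ℂ (Set.range uV) = U) (huWs : Submodule.span ℂ (Set.range uW) = U)
    (hvWs' : Submodule.span ℂ (Set.range vW') = V') (hvUs' : Submodule.span ℂ (Set.range vU') = V')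
    (hwVs' : Submodule.span ℂ (Set.range wV') = W') (hwUs' : Submodule.span ℂ (Set.range wU') = W')
    (huVs' : Submodule.span ℂ (Set.range uV') = U') (huWs' : Submodule.span ℂ (Set.range uW') = U')
    -- principal conditions: identical principal angles for both triples
    (hVW : ∀ i j, (inner ℂ (vW i) (wV j) : ℂ) = if i = j then (Real.cos (θVW i) : ℂ) else 0)
    (hVU : ∀ i j, (inner ℂ (vU i) (uV j) : ℂ) = if i = j then (Real.cos (θVU i) : ℂ) else 0)
    (hWU : ∀ i j, (inner ℂ (wU i) (uW j) : ℂ) = if i = j then (Real.cos (θWU i) : ℂ) else 0)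
    (hVW' : ∀ i j, (inner ℂ (vW' i) (wV' j) : ℂ) = if i = j then (Real.cos (θVW i) : ℂ) else 0)
    (hVU' : ∀ i j, (inner ℂ (vU' i) (uV' j) : ℂ) = if i = j then (Real.cos (θVU i) : ℂ) else 0)
    (hWU' : ∀ i j, (inner ℂ (wU' i) (uW' j) : ℂ) = if i = j then (Real.cos (θWU i) : ℂ) else 0)
    -- identical principal unitaries
    (hUniV : ∀ i k, (inner ℂ (vW i) (vU k) : ℂ) = inner ℂ (vW' i) (vU' k))
    (hUniW : ∀ i k, (inner ℂ (wV i) (wU k) : ℂ) = inner ℂ (wV' i) (wU' k))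
    (hUniU : ∀ k j, (inner ℂ (uV k) (uW j) : ℂ) = inner ℂ (uV' k) (uW' j)) :
    ∃ U₀ : EuclideanSpace ℂ (Fin n) ≃ₗᵢ[ℂ] EuclideanSpace ℂ (Fin n),
      Submodule.map (U₀.toLinearEquiv : EuclideanSpace ℂ (Fin n) →ₗ[ℂ] EuclideanSpace ℂ (Fin n)) V = V' ∧
      Submodule.map (U₀.toLinearEquiv : EuclideanSpace ℂ (Fin n) →ₗ[ℂ] EuclideanSpace ℂ (Fin n)) W = W' ∧
      Submodule.map (U₀.toLinearEquiv : EuclideanSpace ℂ (Fin n) →ₗ[ℂ] EuclideanSpace ℂ (Fin n)) U = U' :=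
  stmt17_general n m V W U V' W' U' vW vU wV wU uV uW vW' vU' wV' wU' uV' uW' θVW θVU θWU hvW hvU
    hwV hwU huV huW hvW' hvU' hwV' hwU' huV' huW' hvWs hvUs hwVs hwUs huVs huWs hvWs' hvUs' hwVs'
    hwUs' huVs' huWs' hVW hVU hWU hVW' hVU' hWU' hUniV hUniW hUniU
end

section
/- Let V, W be subspaces of ℂ^n with orthogonal projections P_V, P_W, and suppose P_W P_V P_W (restricted to W) is invertible on W. Then P_V = P_V P_W (P_W P_V P_W)^{-1} P_W P_V, where the inverse is taken within the subspace W. -/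
open Matrix


/-- Let `P = P_V` and `Q = P_W` be orthogonal projections onto
`m`-dimensional subspaces `V, W` of `ℂ^n`, and suppose `Q P Q` is invertible on `W`,
witnessed by a matrix `M` vanishing on `W^⊥` (`Q M = M = M Q`) and inverting `Q P Q` on `W`
(`M (Q P Q) = Q = (Q P Q) M`).  Then `P = P Q M Q P`, i.e.
`P_V = P_V P_W (P_W P_V P_W)^{-1} P_W P_V`. -/
theorem stmt18 (n m : ℕ) (P Q M : Matrix (Fin n) (Fin n) ℂ)
    (hP : P.IsHermitian) (hP2 : P * P = P) (hPrank : P.rank = m)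
    (hQ : Q.IsHermitian) (hQ2 : Q * Q = Q) (hQrank : Q.rank = m)
    (hM1 : Q * M = M) (hM2 : M * Q = M)
    (hM3 : M * (Q * P * Q) = Q) (hM4 : (Q * P * Q) * M = Q) :
    P = P * Q * M * Q * P := by
  -- QPM = Q
  have hQPM : Q * P * M = Q := by
    calc Q * P * M = Q * P * (Q * M) := by rw [hM1]
    _ = (Q * P * Q) * M := by noncomm_ring
    _ = Q := hM4
  -- rank (Q*P) = m
  have hrk : (Q * P).rank = m := by
    have h1 : (Q * P).rank ≤ m := hPrank ▸ Matrix.rank_mul_le_right Q P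
    have h2 : m ≤ (Q * P).rank := by
      have : (Q * P * M).rank ≤ (Q * P).rank := Matrix.rank_mul_le_left (Q * P) M
      rwa [hQPM, hQrank] at this
    omega
  -- ker equality
  have hkerle : LinearMap.ker P.mulVecLin ≤ LinearMap.ker (Q * P).mulVecLin := by
    intro x hx
    simp only [LinearMap.mem_ker, mulVecLin_apply] at *
    rw [← Matrix.mulVec_mulVec, hx, Matrix.mulVec_zero]
  have hfr : ∀ A : Matrix (Fin n) (Fin n) ℂ,
      Module.finrank ℂ (LinearMap.ker A.mulVecLin) = n - A.rank := by
    intro A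
    have := LinearMap.finrank_range_add_finrank_ker A.mulVecLin
    simp only [Module.finrank_fintype_fun_eq_card, Fintype.card_fin] at this
    have hr : A.rank = Module.finrank ℂ (LinearMap.range A.mulVecLin) := rfl
    omega
  have hker : LinearMap.ker P.mulVecLin = LinearMap.ker (Q * P).mulVecLin := by
    apply Submodule.eq_of_le_of_finrank_eq hkerle
    rw [hfr, hfr, hrk, hPrank]
  -- P * (1 - M*Q*P) = 0
  have key : ∀ x : Fin n → ℂ, P.mulVec ((1 - M * Q * P).mulVec x) = 0 := by
    intro x
    have hQP : (Q * P).mulVec ((1 - M * Q * P).mulVec x) = 0 := by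
      rw [Matrix.mulVec_mulVec]
      have : Q * P * (1 - M * Q * P) = 0 := by
        have : Q * P * (M * Q * P) = Q * P := by
          calc Q * P * (M * Q * P) = (Q * P * M) * (Q * P) := by noncomm_ring
          _ = Q * (Q * P) := by rw [hQPM]
          _ = (Q * Q) * P := by noncomm_ring
          _ = Q * P := by rw [hQ2]
        rw [Matrix.mul_sub, Matrix.mul_one, this, sub_self]
      rw [this, Matrix.zero_mulVec]
    have hmem : (1 - M * Q * P).mulVec x ∈ LinearMap.ker (Q * P).mulVecLin := by
      simpa [Matrix.mulVec_mulVec, ← mul_assoc] using hQP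
    rw [← hker] at hmem
    simpa using hmem
  have hzero : P * (1 - M * Q * P) = 0 := by
    ext i j
    have := key (Pi.single j 1)
    rw [Matrix.mulVec_mulVec] at this
    have := congrFun this i
    simpa [Matrix.mulVec_single] using this
  have : P * (M * Q * P) = P := by
    have := hzero
    rw [Matrix.mul_sub, Matrix.mul_one, sub_eq_zero] at this
    exact this.symm
  calc P = P * (M * Q * P) := this.symm
  _ = P * ((Q * M) * Q * P) := by rw [hM1]
  _ = P * Q * M * Q * P := by noncomm_ring
end
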